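/- arXiv:2008.01327 — 2 statements merged into one kernel-verified Lean document; each statement's English description precedes it below -/
import Mathlib

section
/- In the tournament T_n (n ≥ 1), every vertex in {1, …, 2^(n−1)} has in-degree 2^(n−1) − 1 and out-degree 2^(n−1), and every vertex in {2^(n−1)+1, …, 2^n} has in-degree 2^(n−1) and out-degree 2^(n−1) − 1. -/
open scoped Classical

/-- For a nonzero integer `z`, `oddPart z` is `z` divided by the largest power of 2 dividing `z`. -/
def oddPart (z : ℤ) : ℤ := z / 2 ^ (z.natAbs.factorization 2)

/-- The edge relation of the tournament `T n` on `{1, …, 2^n}`. -/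
def Dominates (i j : ℤ) : Prop := oddPart (j - i) ≡ 1 [ZMOD 4]

/-- In-degree of a vertex `v` of `T n`. -/
noncomputable def inDeg (n : ℕ) (v : ℤ) : ℕ :=
  ((Finset.Icc (1 : ℤ) (2 ^ n)).filter (fun u => Dominates u v)).card

/-- Out-degree of a vertex `v` of `T n`. -/
noncomputable def outDeg (n : ℕ) (v : ℤ) : ℕ :=
  ((Finset.Icc (1 : ℤ) (2 ^ n)).filter (fun u => Dominates v u)).card

/-!
Split the out-neighbours `u` of `v` in `T (m + 2)` by the parity of `u - v`. For odd `u - v`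
the odd part is `u - v` itself, so `v → u` iff `u ≡ v + 1 (mod 4)`: exactly `2 ^ m` vertices.
For even `u - v`, halving `u ↦ ⌈u / 2⌉` maps them onto the out-neighbours of `⌈v / 2⌉` in
`T (m + 1)`, because `oddPart (2 * z) = oddPart z`. Induction then gives the out-degrees, and
the reflection `u ↦ 2 ^ n + 1 - u`, which reverses every edge, turns in-degrees into out-degrees.
-/

open Finset

lemma oddPart_of_not_two_dvd {z : ℤ} (hz : ¬ 2 ∣ z) : oddPart z = z := by
  have : ¬ 2 ∣ z.natAbs := by rwa [← Int.ofNat_dvd_left]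
  simp [oddPart, Nat.factorization_eq_zero_of_not_dvd this]

lemma oddPart_two_mul (z : ℤ) : oddPart (2 * z) = oddPart z := by
  rcases eq_or_ne z 0 with rfl | hz
  · simp
  have hfac : (2 * z).natAbs.factorization 2 = z.natAbs.factorization 2 + 1 := by
    rw [Int.natAbs_mul, Nat.factorization_mul (by norm_num) (by simpa using hz)]
    simp [Nat.Prime.factorization Nat.prime_two, add_comm]
  rw [oddPart, oddPart, hfac, pow_succ', Int.mul_ediv_mul_of_pos _ _ two_pos]

lemma dominates_iff_of_not_two_dvd {i j : ℤ} (h : ¬ 2 ∣ j - i) :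
    Dominates i j ↔ j ≡ i + 1 [ZMOD 4] := by
  rw [Dominates, oddPart_of_not_two_dvd h, Int.ModEq, Int.ModEq]
  omega

lemma not_dominates_self (v : ℤ) : ¬ Dominates v v := by
  simp [Dominates, oddPart, Int.ModEq]

lemma dominates_sub_sub (c i j : ℤ) : Dominates (c - j) (c - i) ↔ Dominates i j := by
  rw [Dominates, Dominates, sub_sub_sub_cancel_left]

lemma dominates_two_mul_sub (c i j : ℤ) :
    Dominates (2 * i - c) (2 * j - c) ↔ Dominates i j := by
  rw [Dominates, Dominates, sub_sub_sub_cancel_right, ← mul_sub, oddPart_two_mul]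

lemma inDeg_eq_outDeg (n : ℕ) (v : ℤ) : inDeg n v = outDeg n (2 ^ n + 1 - v) := by
  apply card_nbij' (fun u => 2 ^ n + 1 - u) (fun u => 2 ^ n + 1 - u) <;>
    intro u hu <;> simp only [coe_filter, mem_Icc, Set.mem_ofPred_eq] at hu ⊢
  · exact ⟨by omega, (dominates_sub_sub _ _ _).2 hu.2⟩
  · refine ⟨by omega, ?_⟩
    rw [← dominates_sub_sub (2 ^ n + 1), sub_sub_cancel]
    exact hu.2
  all_goals ring

lemma card_filter_modEq_Icc_four_mul (k : ℕ) (c : ℤ) :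
    #{u ∈ Icc (1 : ℤ) (4 * k) | u ≡ c [ZMOD 4]} = k := by
  rw [← Nat.cast_inj (R := ℤ), ← zero_add 1, Icc_add_one_left_eq_Ioc,
    Int.Ioc_filter_modEq_card _ _ (by norm_num)]
  have hshift : ((4 * k : ℤ) - c : ℚ) / (4 : ℤ) = k + (0 - c : ℤ) / (4 : ℤ) := by
    push_cast; ring
  rw [hshift]
  simp

lemma card_dominated_odd_sub (m : ℕ) (v : ℤ) :
    #{u ∈ Icc (1 : ℤ) (2 ^ (m + 2)) | Dominates v u ∧ ¬ 2 ∣ u - v} = 2 ^ m := by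
  have hodd : ∀ u, Dominates v u ∧ ¬ 2 ∣ u - v ↔ u ≡ v + 1 [ZMOD 4] := fun u =>
    ⟨fun ⟨hd, h2⟩ => (dominates_iff_of_not_two_dvd h2).1 hd,
     fun h => have h2 : ¬ 2 ∣ u - v := by rw [Int.ModEq] at h; omega
       ⟨(dominates_iff_of_not_two_dvd h2).2 h, h2⟩⟩
  simp_rw [hodd]
  convert card_filter_modEq_Icc_four_mul (2 ^ m) (v + 1) using 4
  push_cast; ring

lemma card_dominated_even_sub (N w c : ℤ) (hc : c = 0 ∨ c = 1) :
    #{u ∈ Icc (1 : ℤ) (2 * N) | Dominates (2 * w - c) u ∧ 2 ∣ u - (2 * w - c)} =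
      #{u ∈ Icc (1 : ℤ) N | Dominates w u} := by
  apply card_nbij' (fun u => (u + c) / 2) (fun s => 2 * s - c) <;>
    intro u hu <;> simp only [coe_filter, mem_Icc, Set.mem_ofPred_eq] at hu ⊢
  · obtain ⟨hu, hdom, hdvd⟩ := hu
    have hu_eq : u = 2 * ((u + c) / 2) - c := by omega
    refine ⟨by omega, ?_⟩
    rwa [← dominates_two_mul_sub c, ← hu_eq]
  · exact ⟨by omega, (dominates_two_mul_sub c _ _).2 hu.2, by omega⟩
  · omega
  · omega

lemma outDeg_add_two (m : ℕ) (v : ℤ) :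
    outDeg (m + 2) v = 2 ^ m + outDeg (m + 1) ((v + 1) / 2) := by
  set w := (v + 1) / 2
  have hv : v = 2 * w - (2 * w - v) := by ring
  have heven : #{u ∈ Icc (1 : ℤ) (2 ^ (m + 2)) | Dominates v u ∧ 2 ∣ u - v} =
      outDeg (m + 1) w := by
    rw [hv, pow_succ' _ (m + 1)]
    exact card_dominated_even_sub _ w _ (by omega)
  rw [outDeg, ← card_filter_add_card_filter_not (fun u => 2 ∣ u - v), filter_filter,
    filter_filter, heven, card_dominated_odd_sub, add_comm]

lemma outDeg_one {v : ℤ} (hv : v ∈ Icc (1 : ℤ) 2) :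
    outDeg 1 v = if v ≤ 1 then 1 else 0 := by
  have h12 : Dominates 1 2 := (dominates_iff_of_not_two_dvd (by decide)).2 (by decide)
  have h21 : ¬ Dominates 2 1 := fun h =>
    absurd ((dominates_iff_of_not_two_dvd (by decide)).1 h) (by decide)
  have hIcc : Icc (1 : ℤ) 2 = {1, 2} := by decide
  obtain rfl | rfl : v = 1 ∨ v = 2 := by rw [mem_Icc] at hv; omega
  all_goals
    rw [outDeg, pow_one, hIcc]
    simp [filter_insert, filter_singleton, not_dominates_self, h12, h21]

lemma outDeg_succ (m : ℕ) {v : ℤ} (hv : v ∈ Icc (1 : ℤ) (2 ^ (m + 1))) :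
    outDeg (m + 1) v = if v ≤ 2 ^ m then 2 ^ m else 2 ^ m - 1 := by
  induction m generalizing v with
  | zero => simpa using outDeg_one hv
  | succ k ih =>
    rw [mem_Icc] at hv
    have hpow : (2 : ℤ) ^ (k + 2) = 2 * 2 ^ (k + 1) := pow_succ' _ _
    have hw : (v + 1) / 2 ∈ Icc (1 : ℤ) (2 ^ (k + 1)) := by rw [mem_Icc]; omega
    rw [outDeg_add_two, ih hw]
    have hpow' : (2 : ℤ) ^ (k + 1) = 2 * 2 ^ k := pow_succ' _ _
    have hpos := Nat.one_le_two_pow (n := k)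
    split_ifs <;> omega

lemma inDeg_succ (m : ℕ) {v : ℤ} (hv : v ∈ Icc (1 : ℤ) (2 ^ (m + 1))) :
    inDeg (m + 1) v = if v ≤ 2 ^ m then 2 ^ m - 1 else 2 ^ m := by
  rw [mem_Icc] at hv
  have hpow : (2 : ℤ) ^ (m + 1) = 2 * 2 ^ m := pow_succ' _ _
  rw [inDeg_eq_outDeg, outDeg_succ m (by rw [mem_Icc]; omega)]
  split_ifs <;> first | rfl | omega

theorem stmt_5 (n : ℕ) (hn : 1 ≤ n) :
    (∀ v ∈ Finset.Icc (1 : ℤ) (2 ^ (n - 1)),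
      inDeg n v = 2 ^ (n - 1) - 1 ∧ outDeg n v = 2 ^ (n - 1)) ∧
    (∀ v ∈ Finset.Icc ((2 : ℤ) ^ (n - 1) + 1) (2 ^ n),
      inDeg n v = 2 ^ (n - 1) ∧ outDeg n v = 2 ^ (n - 1) - 1) := by
  obtain ⟨m, rfl⟩ : ∃ m, n = m + 1 := ⟨n - 1, by omega⟩
  have hpow : (2 : ℤ) ^ (m + 1) = 2 * 2 ^ m := pow_succ' _ _
  have hpos : (0 : ℤ) < 2 ^ m := by positivity
  rw [Nat.add_sub_cancel]
  constructor
  · intro v hv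
    rw [mem_Icc] at hv
    have hv' : v ∈ Icc (1 : ℤ) (2 ^ (m + 1)) := by rw [mem_Icc]; omega
    simp [inDeg_succ m hv', outDeg_succ m hv', hv.2]
  · intro v hv
    rw [mem_Icc] at hv
    have hv' : v ∈ Icc (1 : ℤ) (2 ^ (m + 1)) := by rw [mem_Icc]; omega
    have hgt : ¬ v ≤ 2 ^ m := by omega
    simp [inDeg_succ m hv', outDeg_succ m hv', hgt]
end

section
/- For all n ≥ 0, the tournament T_n has only the identity automorphism. -/
/-- The edge relation of the tournament `T n` on vertices `{1, …, 2^n}`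
(represented as `Fin (2^n)`, vertex `i` standing for the number `i+1`):
an edge from `i` to `j` iff `odd (j - i) ≡ 1 (mod 4)`. -/
def T (n : ℕ) (i j : Fin (2 ^ n)) : Prop :=
  oddPart (((j : ℕ) : ℤ) - ((i : ℕ) : ℤ)) ≡ 1 [ZMOD 4]

/-!
Read the vertices of `T N` as the integers in `[0, 2 ^ N)`. Away from `±2 ^ (N - 1)`, the odd part
modulo 4 of a difference only depends on its residue modulo `2 ^ N`, so the reflection
`y ↦ 2x - y (mod 2 ^ N)` turns the out-neighbours of `x` into its in-neighbours, apart from the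
antipode `x ± 2 ^ (N - 1)`. Hence vertices of the lower half have out-degree `2 ^ (N - 1)` and
those of the upper half `2 ^ (N - 1) - 1`, so an automorphism preserves both halves. Each half is a
translate of `T (N - 1)`, and induction on `N` concludes.
-/

open Finset

lemma oddPart_two_pow_mul (s : ℕ) {m : ℤ} (hm : Odd m) : oddPart (2 ^ s * m) = m := by
  have hm' : Odd m.natAbs := Int.natAbs_odd.mpr hm
  have hv : (2 ^ s * m).natAbs.factorization 2 = s := by
    rw [Int.natAbs_mul, Int.natAbs_pow, Nat.factorization_mul (by positivity) hm'.pos.ne']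
    simp [Nat.Prime.factorization_pow Nat.prime_two,
      Nat.factorization_eq_zero_of_not_dvd hm'.not_two_dvd_nat]
  rw [oddPart, hv, Int.mul_ediv_cancel_left _ (by positivity)]

lemma exists_eq_two_pow_mul_odd {z : ℤ} (hz : z ≠ 0) : ∃ s m, Odd m ∧ z = 2 ^ s * m := by
  obtain ⟨s, m, hm, h⟩ := Nat.exists_eq_two_pow_mul_odd (Int.natAbs_ne_zero.mpr hz)
  have hm' : Odd (m : ℤ) := by exact_mod_cast hm
  rcases Int.natAbs_eq z with hz' | hz'
  · exact ⟨s, m, hm', by rw [hz', h]; push_cast; ring⟩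
  · exact ⟨s, -m, hm'.neg, by rw [hz', h]; push_cast; ring⟩

lemma odd_oddPart {z : ℤ} (hz : z ≠ 0) : Odd (oddPart z) := by
  obtain ⟨s, m, hm, rfl⟩ := exists_eq_two_pow_mul_odd hz
  rwa [oddPart_two_pow_mul s hm]

lemma oddPart_neg (z : ℤ) : oddPart (-z) = -oddPart z := by
  rcases eq_or_ne z 0 with rfl | hz
  · simp [oddPart]
  obtain ⟨s, m, hm, rfl⟩ := exists_eq_two_pow_mul_odd hz
  rw [← mul_neg, oddPart_two_pow_mul s hm, oddPart_two_pow_mul s hm.neg]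

lemma oddPart_two_pow_mul_add {s k : ℕ} {m : ℤ} (hm : Odd m) (hk : s + 2 ≤ k) (c : ℤ) :
    oddPart (2 ^ s * m + 2 ^ k * c) ≡ m [ZMOD 4] := by
  obtain ⟨j, rfl⟩ : ∃ j, k = s + 2 + j := ⟨k - (s + 2), by omega⟩
  have hsplit : 2 ^ s * m + 2 ^ (s + 2 + j) * c = 2 ^ s * (m + 4 * (2 ^ j * c)) := by ring
  rw [hsplit, oddPart_two_pow_mul s (hm.add_even ⟨2 * (2 ^ j * c), by ring⟩)]
  exact Int.add_mul_emod_self_left m 4 _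

lemma oddPart_modEq_of_modEq {N : ℕ} {x y : ℤ} (hx : x ≠ 0) (hxN : |x| < 2 ^ N)
    (hmid : |x| ≠ 2 ^ (N - 1)) (hxy : x ≡ y [ZMOD 2 ^ N]) :
    oddPart y ≡ oddPart x [ZMOD 4] := by
  obtain ⟨s, m, hm, rfl⟩ := exists_eq_two_pow_mul_odd hx
  -- the bounds on `|x|` force `s ≤ N - 2`, so adding a multiple of `2 ^ N` moves `m` by one of 4
  rw [abs_mul, abs_pow, abs_two] at hxN hmid
  have hm1 : 1 ≤ |m| := Int.one_le_abs (by rintro rfl; simp at hm)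
  have hs : s + 2 ≤ N := by
    by_contra h
    obtain hNs | rfl : N ≤ s ∨ N = s + 1 := by omega
    · have : (2 : ℤ) ^ N ≤ 2 ^ s := pow_le_pow_right₀ one_le_two hNs
      nlinarith [pow_pos (two_pos (α := ℤ)) s]
    · have : |m| < 2 := by
        rw [pow_succ] at hxN
        nlinarith [pow_pos (two_pos (α := ℤ)) s]
      exact hmid (by simp [show |m| = 1 by omega])
  obtain ⟨c, hc⟩ := hxy.dvd
  rw [oddPart_two_pow_mul s hm, show y = 2 ^ s * m + 2 ^ N * c by linarith]
  exact oddPart_two_pow_mul_add hm hs c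

/-- `T n i j` is `Beats i j` on the values of `i` and `j`. -/
def Beats (a b : ℤ) : Prop := oddPart (b - a) ≡ 1 [ZMOD 4]

instance : DecidableRel Beats := fun _ _ => inferInstanceAs (Decidable (_ ≡ _ [ZMOD 4]))

lemma not_beats_self (a : ℤ) : ¬ Beats a a := by
  simp [Beats, oddPart, Int.ModEq]

lemma not_beats_iff {a b : ℤ} (hab : a ≠ b) : ¬ Beats b a ↔ Beats a b := by
  obtain ⟨k, hk⟩ := odd_oddPart (sub_ne_zero.mpr hab.symm)
  rw [Beats, Beats, ← neg_sub, oddPart_neg, Int.ModEq, Int.ModEq, hk]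
  omega

lemma beats_add_right_iff (a b c : ℤ) : Beats (a + c) (b + c) ↔ Beats a b := by
  simp [Beats]

noncomputable def vertices (N : ℕ) : Finset ℤ := Ico 0 (2 ^ N)

@[simp]
lemma mem_vertices {N : ℕ} {x : ℤ} : x ∈ vertices N ↔ 0 ≤ x ∧ x < 2 ^ N := mem_Ico

lemma card_vertices (N : ℕ) : #(vertices N) = 2 ^ N := by
  rw [vertices, Int.card_Ico, sub_zero]
  exact_mod_cast Int.toNat_natCast (2 ^ N)

noncomputable def outNbrs (N : ℕ) (x : ℤ) : Finset ℤ := (vertices N).filter (Beats x)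

noncomputable def inNbrs (N : ℕ) (x : ℤ) : Finset ℤ := (vertices N).filter (Beats · x)

lemma card_outNbrs_add_card_inNbrs {N : ℕ} {x : ℤ} (hx : x ∈ vertices N) :
    #(outNbrs N x) + #(inNbrs N x) = 2 ^ N - 1 := by
  have hout : outNbrs N x = ((vertices N).erase x).filter (Beats x) := by
    ext y
    rcases eq_or_ne y x with rfl | hyx <;> simp [outNbrs, not_beats_self, *]
  have hin : inNbrs N x = ((vertices N).erase x).filter (¬ Beats x ·) := by
    ext y
    rcases eq_or_ne y x with rfl | hyx <;> simp [inNbrs, not_beats_self, not_beats_iff, *]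
  rw [hout, hin, card_filter_add_card_filter_not, card_erase_of_mem hx, card_vertices]

def reflect (N : ℕ) (x y : ℤ) : ℤ := (2 * x - y) % 2 ^ N

lemma reflect_mem (N : ℕ) (x y : ℤ) : reflect N x y ∈ vertices N :=
  mem_vertices.mpr ⟨Int.emod_nonneg _ (by positivity), Int.emod_lt_of_pos _ (by positivity)⟩

lemma reflect_self {N : ℕ} {x : ℤ} (hx : x ∈ vertices N) : reflect N x x = x := by
  rw [mem_vertices] at hx
  rw [reflect, two_mul, add_sub_cancel_right, Int.emod_eq_of_lt hx.1 hx.2]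

lemma reflect_reflect {N : ℕ} (x : ℤ) {y : ℤ} (hy : y ∈ vertices N) :
    reflect N x (reflect N x y) = y := by
  rw [mem_vertices] at hy
  rw [reflect, reflect, ((Int.mod_modEq _ _).sub_left _).eq, sub_sub_cancel,
    Int.emod_eq_of_lt hy.1 hy.2]

lemma beats_reflect_iff {N : ℕ} {x y : ℤ} (hx : x ∈ vertices N) (hy : y ∈ vertices N)
    (hxy : |y - x| ≠ 2 ^ (N - 1)) : Beats (reflect N x y) x ↔ Beats x y := by
  rcases eq_or_ne y x with rfl | hyx
  · rw [reflect_self hy]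
  rw [mem_vertices] at hx hy
  have hmod : y - x ≡ x - reflect N x y [ZMOD 2 ^ N] := by
    have h := (Int.mod_modEq (2 * x - y) (2 ^ N)).sub_left x
    rw [show x - (2 * x - y) = y - x by ring] at h
    exact h.symm
  have h := oddPart_modEq_of_modEq (sub_ne_zero.mpr hyx) (abs_lt.mpr ⟨by linarith, by linarith⟩)
    hxy hmod
  exact ⟨h.symm.trans, h.trans⟩

def antipode (n : ℕ) (x : ℤ) : ℤ := if x < 2 ^ n then x + 2 ^ n else x - 2 ^ n

lemma antipode_mem {n : ℕ} {x : ℤ} (hx : x ∈ vertices (n + 1)) :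
    antipode n x ∈ vertices (n + 1) := by
  rw [mem_vertices, pow_succ] at *
  unfold antipode
  split_ifs <;> omega

lemma antipode_ne (n : ℕ) (x : ℤ) : antipode n x ≠ x := by
  unfold antipode
  split_ifs <;> simp

lemma abs_sub_eq_two_pow_iff {n : ℕ} {x y : ℤ} (hx : x ∈ vertices (n + 1))
    (hy : y ∈ vertices (n + 1)) :
    |y - x| = 2 ^ n ↔ y = antipode n x := by
  rw [mem_vertices, pow_succ] at *
  unfold antipode
  rw [abs_eq (by positivity)]
  split_ifs <;> omega

lemma reflect_antipode {n : ℕ} {x : ℤ} (hx : x ∈ vertices (n + 1)) :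
    reflect (n + 1) x (antipode n x) = antipode n x := by
  have h := mem_vertices.mp (antipode_mem hx)
  have hsplit : 2 * x - antipode n x
      = antipode n x + 2 ^ (n + 1) * (if x < 2 ^ n then -1 else 1) := by
    unfold antipode
    split_ifs <;> ring
  rw [reflect, hsplit, Int.add_mul_emod_self_left, Int.emod_eq_of_lt h.1 h.2]

lemma beats_antipode_iff (n : ℕ) (x : ℤ) : Beats x (antipode n x) ↔ x < 2 ^ n := by
  unfold Beats antipode
  split_ifs with h
  · rw [show x + 2 ^ n - x = 2 ^ n * 1 by ring, oddPart_two_pow_mul n odd_one]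
    simp [h]
  · rw [show x - 2 ^ n - x = -(2 ^ n * 1) by ring, oddPart_neg, oddPart_two_pow_mul n odd_one]
    simp [h, Int.ModEq]

lemma card_outNbrs_erase_antipode {n : ℕ} {x : ℤ} (hx : x ∈ vertices (n + 1)) :
    #((outNbrs (n + 1) x).erase (antipode n x)) = #((inNbrs (n + 1) x).erase (antipode n x)) := by
  have hreflect {y : ℤ} (hy : y ∈ vertices (n + 1)) (hya : y ≠ antipode n x) :
      reflect (n + 1) x y ≠ antipode n x ∧ (Beats (reflect (n + 1) x y) x ↔ Beats x y) := by
    refine ⟨fun h => hya ?_, beats_reflect_iff hx hy ?_⟩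
    · rw [← reflect_reflect x hy, h, reflect_antipode hx]
    · rwa [Nat.add_sub_cancel, Ne, abs_sub_eq_two_pow_iff hx hy]
  refine card_bij' (fun y _ => reflect (n + 1) x y) (fun y _ => reflect (n + 1) x y)
    ?_ ?_ ?_ ?_
  · intro y hy
    simp only [mem_erase, outNbrs, inNbrs, mem_filter] at hy ⊢
    have h := hreflect hy.2.1 hy.1
    exact ⟨h.1, reflect_mem _ _ _, h.2.mpr hy.2.2⟩
  · intro y hy
    simp only [mem_erase, outNbrs, inNbrs, mem_filter] at hy ⊢
    have h := hreflect hy.2.1 hy.1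
    have h' := hreflect (reflect_mem (n + 1) x y) h.1
    rw [reflect_reflect x hy.2.1] at h'
    exact ⟨h.1, reflect_mem _ _ _, h'.2.mp hy.2.2⟩
  · exact fun y hy => reflect_reflect x (mem_filter.mp (mem_of_mem_erase hy)).1
  · exact fun y hy => reflect_reflect x (mem_filter.mp (mem_of_mem_erase hy)).1

lemma card_outNbrs {n : ℕ} {x : ℤ} (hx : x ∈ vertices (n + 1)) :
    #(outNbrs (n + 1) x) = if x < 2 ^ n then 2 ^ n else 2 ^ n - 1 := by
  have hsum := card_outNbrs_add_card_inNbrs hx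
  have herase := card_outNbrs_erase_antipode hx
  have ha := antipode_mem hx
  have hnot := not_beats_iff (antipode_ne n x).symm
  rw [pow_succ] at hsum
  split_ifs with h
  · have hout : antipode n x ∈ outNbrs (n + 1) x :=
      mem_filter.mpr ⟨ha, (beats_antipode_iff n x).mpr h⟩
    have hin : antipode n x ∉ inNbrs (n + 1) x := fun hin =>
      hnot.mpr ((beats_antipode_iff n x).mpr h) (mem_filter.mp hin).2
    rw [card_erase_of_mem hout, erase_eq_of_notMem hin] at herase
    have := card_pos.mpr ⟨_, hout⟩
    omega
  · have hin : antipode n x ∈ inNbrs (n + 1) x :=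
      mem_filter.mpr ⟨ha, by_contra fun hb => h ((beats_antipode_iff n x).mp (hnot.mp hb))⟩
    have hout : antipode n x ∉ outNbrs (n + 1) x := fun hout =>
      h ((beats_antipode_iff n x).mp (mem_filter.mp hout).2)
    rw [card_erase_of_mem hin, erase_eq_of_notMem hout] at herase
    have := card_pos.mpr ⟨_, hin⟩
    omega

lemma injOn_of_beats_iff {N : ℕ} {g : ℤ → ℤ}
    (hg : ∀ x ∈ vertices N, ∀ y ∈ vertices N, Beats x y ↔ Beats (g x) (g y)) :
    Set.InjOn g (vertices N) := by
  intro x hx y hy hxy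
  by_contra hne
  by_cases hb : Beats x y
  · exact not_beats_self (g y) (hxy ▸ (hg x hx y hy).mp hb)
  · exact not_beats_self (g y) (hxy ▸ (hg y hy x hx).mp ((not_beats_iff (Ne.symm hne)).mp hb))

lemma card_outNbrs_apply {N : ℕ} {g : ℤ → ℤ}
    (hmaps : Set.MapsTo g (vertices N) (vertices N))
    (hg : ∀ x ∈ vertices N, ∀ y ∈ vertices N, Beats x y ↔ Beats (g x) (g y)) {x : ℤ}
    (hx : x ∈ vertices N) : #(outNbrs N (g x)) = #(outNbrs N x) := by
  have hinj := injOn_of_beats_iff hg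
  have hout : #(outNbrs N x) ≤ #(outNbrs N (g x)) :=
    card_le_card_of_injOn g (fun y hy => by
      obtain ⟨hyV, hxy⟩ := mem_filter.mp hy
      exact mem_filter.mpr ⟨hmaps hyV, (hg x hx y hyV).mp hxy⟩) (hinj.mono (filter_subset _ _))
  have hin : #(inNbrs N x) ≤ #(inNbrs N (g x)) :=
    card_le_card_of_injOn g (fun y hy => by
      obtain ⟨hyV, hyx⟩ := mem_filter.mp hy
      exact mem_filter.mpr ⟨hmaps hyV, (hg y hyV x hx).mp hyx⟩) (hinj.mono (filter_subset _ _))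
  have := card_outNbrs_add_card_inNbrs hx
  have := card_outNbrs_add_card_inNbrs (hmaps hx)
  omega

lemma lt_two_pow_iff_of_beats_iff {n : ℕ} {g : ℤ → ℤ}
    (hmaps : Set.MapsTo g (vertices (n + 1)) (vertices (n + 1)))
    (hg : ∀ x ∈ vertices (n + 1), ∀ y ∈ vertices (n + 1), Beats x y ↔ Beats (g x) (g y))
    {x : ℤ} (hx : x ∈ vertices (n + 1)) : g x < 2 ^ n ↔ x < 2 ^ n := by
  have h := card_outNbrs_apply hmaps hg hx
  rw [card_outNbrs (hmaps hx), card_outNbrs hx] at h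
  have : 0 < 2 ^ n := by positivity
  split_ifs at h <;> first | tauto | omega

theorem eqOn_id_of_beats_iff (n : ℕ) {g : ℤ → ℤ}
    (hmaps : Set.MapsTo g (vertices n) (vertices n))
    (hg : ∀ x ∈ vertices n, ∀ y ∈ vertices n, Beats x y ↔ Beats (g x) (g y)) :
    Set.EqOn g id (vertices n) := by
  induction n generalizing g with
  | zero =>
    intro x hx
    have hgx := hmaps hx
    simp only [mem_coe, mem_vertices, pow_zero] at hx hgx
    simp only [id]
    omega
  | succ n ih =>
    have hpow : (2 : ℤ) ^ (n + 1) = 2 * 2 ^ n := pow_succ' 2 n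
    have hhalf := fun x (hx : x ∈ vertices (n + 1)) => lt_two_pow_iff_of_beats_iff hmaps hg hx
    have hlow : ∀ x ∈ vertices n, x ∈ vertices (n + 1) := by
      simp only [mem_vertices, hpow]
      intro x hx
      omega
    have hhigh : ∀ x ∈ vertices n, x + 2 ^ n ∈ vertices (n + 1) := by
      simp only [mem_vertices, hpow]
      intro x hx
      omega
    have hg_low : Set.EqOn g id (vertices n) := by
      refine ih (fun x hx => ?_) (fun x hx y hy => hg x (hlow x hx) y (hlow y hy))
      have := mem_vertices.mp (hmaps (hlow x hx))
      exact mem_vertices.mpr ⟨this.1, (hhalf x (hlow x hx)).mpr (mem_vertices.mp hx).2⟩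
    have hg_high : Set.EqOn (fun x => g (x + 2 ^ n) - 2 ^ n) id (vertices n) := by
      refine ih (fun x hx => ?_) (fun x hx y hy => ?_)
      · have h1 := mem_vertices.mp (hmaps (hhigh x hx))
        have h2 := (hhalf _ (hhigh x hx)).not.mpr (by linarith [(mem_vertices.mp hx).1])
        simp only [mem_coe, mem_vertices]
        omega
      · rw [← beats_add_right_iff (g _ - _) (g _ - _) (2 ^ n), sub_add_cancel, sub_add_cancel]
        exact (beats_add_right_iff x y _).symm.trans (hg _ (hhigh x hx) _ (hhigh y hy))
    intro x hx
    rw [mem_coe, mem_vertices, hpow] at hx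
    by_cases h : x < 2 ^ n
    · exact hg_low (mem_vertices.mpr ⟨hx.1, h⟩)
    · have := hg_high (mem_vertices.mpr ⟨by omega, by omega⟩ : x - 2 ^ n ∈ vertices n)
      simp only [sub_add_cancel, id] at this
      simp only [id]
      omega

lemma natCast_val_mem_vertices {n : ℕ} (i : Fin (2 ^ n)) : ((i : ℕ) : ℤ) ∈ vertices n :=
  mem_vertices.mpr ⟨by positivity, by exact_mod_cast i.isLt⟩

lemma forall_mem_vertices {n : ℕ} {P : ℤ → Prop} :
    (∀ x ∈ vertices n, P x) ↔ ∀ i : Fin (2 ^ n), P (i : ℕ) := by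
  refine ⟨fun h i => h _ (natCast_val_mem_vertices i), fun h x hx => ?_⟩
  obtain ⟨hx0, hxn⟩ := mem_vertices.mp hx
  lift x to ℕ using hx0
  exact h ⟨x, by exact_mod_cast hxn⟩

/-- The tournament `T n` has only the identity automorphism. -/
theorem stmt_11 (n : ℕ) (f : Fin (2 ^ n) ≃ Fin (2 ^ n))
    (hf : ∀ u v : Fin (2 ^ n), T n u v ↔ T n (f u) (f v)) :
    f = Equiv.refl (Fin (2 ^ n)) := by
  let g : ℤ → ℤ := fun z => (f ⟨z.toNat % 2 ^ n, Nat.mod_lt _ (by positivity)⟩ : ℕ)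
  have hg (i : Fin (2 ^ n)) : g i = f i := by simp [g, Nat.mod_eq_of_lt i.isLt]
  have hid : Set.EqOn g id (vertices n) := by
    refine eqOn_id_of_beats_iff n ?_ ?_ <;>
      simp only [Set.MapsTo, mem_coe, forall_mem_vertices, hg]
    · exact fun i => natCast_val_mem_vertices (f i)
    · exact hf
  ext i
  simpa [hg] using hid (natCast_val_mem_vertices i)
end
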